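/- Suppose that for every agent i the no-arbitrage condition NA_i holds, i.e. K_i ∩ L^0_+(Ω, ℱ^i_T, P) = {0}, and that each set K_i − L^0_+(Ω, ℱ^i_T, P) is closed under P-a.s. convergence of sequences in L^0(Ω, ℱ^i_T, P). Then the set ⨉_{i=1}^N (K_i − L^0_+(Ω, ℱ^i_T, P)) + ℝ^N_0 is closed under componentwise P-a.s. convergence of sequences in L^0(Ω,𝐅_T,P). -/
import Mathlib


open MeasureTheory Filter Topology

namespace CollectiveArb

variable {Ω : Type*}

/-- Terminal gains `K_i` of admissible (predictable) strategies for an agent with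
filtration `F`, trading the assets indexed by `A`, over times `1,…,T`. -/
def gainsSet {J : ℕ} (F : ℕ → MeasurableSpace Ω) (T : ℕ)
    (A : Finset (Fin J)) (X : Fin J → ℕ → Ω → ℝ) : Set (Ω → ℝ) :=
  { g | ∃ H : Fin J → ℕ → Ω → ℝ,
      (∀ j ∈ A, ∀ s, 1 ≤ s → s ≤ T → Measurable[F (s - 1)] (H j s)) ∧
      g = fun ω => ∑ j ∈ A, ∑ s ∈ Finset.Icc 1 T, H j s ω * (X j s ω - X j (s - 1) ω) }

/-- No collective arbitrage for the gains sets `K` and the exchange set `Y`: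
`(K₁ × ⋯ × K_N + Y) ∩ L⁰₊ = {0}`. -/
def NCA {N : ℕ} [MeasurableSpace Ω] (P : Measure Ω)
    (K : Fin N → Set (Ω → ℝ)) (Y : Set (Fin N → Ω → ℝ)) : Prop :=
  ∀ k : Fin N → Ω → ℝ, ∀ y ∈ Y, (∀ i, k i ∈ K i) →
    (∀ i, ∀ᵐ ω ∂P, 0 ≤ k i ω + y i ω) →
    ∀ i, (fun ω => k i ω + y i ω) =ᵐ[P] fun _ => (0 : ℝ)

/-- `K^𝒴 = ⨉ᵢ (Kᵢ − L⁰₊(ℱᵢ_T)) + 𝒴`. -/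
def KY {N : ℕ} [MeasurableSpace Ω] (P : Measure Ω)
    (FT : Fin N → MeasurableSpace Ω)
    (K : Fin N → Set (Ω → ℝ)) (Y : Set (Fin N → Ω → ℝ)) : Set (Fin N → Ω → ℝ) :=
  { f | ∃ (k l y : Fin N → Ω → ℝ), y ∈ Y ∧ (∀ i, k i ∈ K i) ∧
      (∀ i, Measurable[FT i] (l i) ∧ (∀ᵐ ω ∂P, 0 ≤ l i ω)) ∧
      ∀ i, f i = fun ω => k i ω - l i ω + y i ω }

/-- `ℝ^N_0`: zero-sum deterministic exchanges, viewed as constant random vectors. -/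
def zeroSum (Ω : Type*) (N : ℕ) : Set (Fin N → Ω → ℝ) :=
  { y | ∃ x : Fin N → ℝ, (∑ i, x i) = 0 ∧ ∀ i, y i = fun _ => x i }

/-- `span(ℝ^N_0, Y_1, …, Y_R)`: the finite-dimensional space of exchanges generated
by `ℝ^N_0` and the random vectors `Ys 1, …, Ys R`. -/
def spanExch {N R : ℕ} (Ys : Fin R → Fin N → Ω → ℝ) : Set (Fin N → Ω → ℝ) :=
  { y | ∃ (x : Fin N → ℝ) (c : Fin R → ℝ), (∑ i, x i) = 0 ∧
      ∀ i, y i = fun ω => x i + ∑ r, c r * Ys r i ω }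

/-- `span(𝒴₀ ∪ {g})` for a vector subspace `𝒴₀`. -/
def spanWith {N : ℕ} (Y0 : Set (Fin N → Ω → ℝ)) (g : Fin N → Ω → ℝ) :
    Set (Fin N → Ω → ℝ) :=
  { y | ∃ w ∈ Y0, ∃ c : ℝ, ∀ i, y i = fun ω => w i ω + c * g i ω }

/-- Equivalent martingale measures `Mᵢₑ` for the assets in `A`, w.r.t. the filtration `F`. -/
def martMeasures {J : ℕ} [MeasurableSpace Ω] (P : Measure Ω)
    (F : ℕ → MeasurableSpace Ω) (T : ℕ) (A : Finset (Fin J))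
    (X : Fin J → ℕ → Ω → ℝ) : Set (Measure Ω) :=
  { Q | IsProbabilityMeasure Q ∧ Q ≪ P ∧ P ≪ Q ∧
      ∀ j ∈ A, (∀ t, t ≤ T → Integrable (X j t) Q) ∧
        ∀ s t, s ≤ t → t ≤ T → X j s =ᵐ[Q] Q[X j t | F s] }

/-- Equivalent collective martingale measures `ℳₑ(𝒴)`. -/
def MeY {J N : ℕ} [MeasurableSpace Ω] (P : Measure Ω)
    (F : Fin N → ℕ → MeasurableSpace Ω) (T : ℕ) (assets : Fin N → Finset (Fin J))
    (X : Fin J → ℕ → Ω → ℝ) (Y : Set (Fin N → Ω → ℝ)) : Set (Fin N → Measure Ω) :=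
  { Q | (∀ i, Q i ∈ martMeasures P (F i) T (assets i) X) ∧
      (∀ y ∈ Y, ∀ i, Integrable (y i) (Q i)) ∧
      ∀ y ∈ Y, (∑ i, ∫ ω, y i ω ∂(Q i)) ≤ 0 }

/-- `ℳ^φ_e(𝒴) = {Q ∈ ℳₑ(𝒴) : E_{Qⁱ}[|φⁱ|] < ∞ ∀ i}`. -/
def MeYphi {J N : ℕ} [MeasurableSpace Ω] (P : Measure Ω)
    (F : Fin N → ℕ → MeasurableSpace Ω) (T : ℕ) (assets : Fin N → Finset (Fin J))
    (X : Fin J → ℕ → Ω → ℝ) (Y : Set (Fin N → Ω → ℝ))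
    (φ : Fin N → Ω → ℝ) : Set (Fin N → Measure Ω) :=
  { Q | Q ∈ MeY P F T assets X Y ∧ ∀ i, Integrable (φ i) (Q i) }

/-- Closedness of a set of random vectors under componentwise `P`-a.s. convergence
of sequences (within `L⁰(Ω, 𝐅_T, P)`). -/
def ClosedAS {N : ℕ} [MeasurableSpace Ω] (P : Measure Ω)
    (FT : Fin N → MeasurableSpace Ω) (S : Set (Fin N → Ω → ℝ)) : Prop :=
  ∀ (f : ℕ → Fin N → Ω → ℝ) (g : Fin N → Ω → ℝ),
    (∀ n, f n ∈ S) → (∀ i, Measurable[FT i] (g i)) →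
    (∀ i, ∀ᵐ ω ∂P, Tendsto (fun n => f n i ω) atTop (𝓝 (g i ω))) →
    g ∈ S

/-- Collective superhedging price `ρ^𝒴₊(f)` (with `inf ∅ = +∞`). -/
noncomputable def rhoPlus {N : ℕ} [MeasurableSpace Ω] (P : Measure Ω)
    (K : Fin N → Set (Ω → ℝ)) (Y : Set (Fin N → Ω → ℝ))
    (f : Fin N → Ω → ℝ) : EReal :=
  sInf { z : EReal | ∃ m : Fin N → ℝ, z = ((∑ i, m i : ℝ) : EReal) ∧
      ∃ k : Fin N → Ω → ℝ, (∀ i, k i ∈ K i) ∧ ∃ y ∈ Y,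
        ∀ i, ∀ᵐ ω ∂P, f i ω ≤ m i + k i ω + y i ω }

/-- Collective subhedging price `ρ^𝒴₋(f)` (with `sup ∅ = −∞`). -/
noncomputable def rhoMinus {N : ℕ} [MeasurableSpace Ω] (P : Measure Ω)
    (K : Fin N → Set (Ω → ℝ)) (Y : Set (Fin N → Ω → ℝ))
    (f : Fin N → Ω → ℝ) : EReal :=
  sSup { z : EReal | ∃ m : Fin N → ℝ, z = ((∑ i, m i : ℝ) : EReal) ∧
      ∃ k : Fin N → Ω → ℝ, (∀ i, k i ∈ K i) ∧ ∃ y ∈ Y,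
        ∀ i, ∀ᵐ ω ∂P, m i + k i ω - y i ω ≤ f i ω }

/-- `ρ^𝒴₊(f)` is attained. -/
def rhoPlusAttained {N : ℕ} [MeasurableSpace Ω] (P : Measure Ω)
    (K : Fin N → Set (Ω → ℝ)) (Y : Set (Fin N → Ω → ℝ))
    (f : Fin N → Ω → ℝ) : Prop :=
  ∃ (m : Fin N → ℝ) (k y : Fin N → Ω → ℝ), y ∈ Y ∧ (∀ i, k i ∈ K i) ∧
    (∀ i, ∀ᵐ ω ∂P, f i ω ≤ m i + k i ω + y i ω) ∧
    rhoPlus P K Y f = ((∑ i, m i : ℝ) : EReal)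

/-- `ρ^𝒴₋(f)` is attained. -/
def rhoMinusAttained {N : ℕ} [MeasurableSpace Ω] (P : Measure Ω)
    (K : Fin N → Set (Ω → ℝ)) (Y : Set (Fin N → Ω → ℝ))
    (f : Fin N → Ω → ℝ) : Prop :=
  ∃ (m : Fin N → ℝ) (k y : Fin N → Ω → ℝ), y ∈ Y ∧ (∀ i, k i ∈ K i) ∧
    (∀ i, ∀ᵐ ω ∂P, m i + k i ω - y i ω ≤ f i ω) ∧
    rhoMinus P K Y f = ((∑ i, m i : ℝ) : EReal)

/-- `f` is `𝒴`-collectively replicable: `f ∈ ℝ^N + (K₁ × ⋯ × K_N) + 𝒴` in `L⁰`. -/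
def Replicable {N : ℕ} [MeasurableSpace Ω] (P : Measure Ω)
    (K : Fin N → Set (Ω → ℝ)) (Y : Set (Fin N → Ω → ℝ))
    (f : Fin N → Ω → ℝ) : Prop :=
  ∃ (m : Fin N → ℝ) (k y : Fin N → Ω → ℝ), y ∈ Y ∧ (∀ i, k i ∈ K i) ∧
    ∀ i, f i =ᵐ[P] fun ω => m i + k i ω + y i ω


/-- Classical no-arbitrage for a single agent: `Kᵢ ∩ L⁰₊ = {0}`. -/
def NAone [MeasurableSpace Ω] (P : Measure Ω) (Ki : Set (Ω → ℝ)) : Prop :=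
  ∀ k ∈ Ki, (∀ᵐ ω ∂P, 0 ≤ k ω) → k =ᵐ[P] fun _ => (0 : ℝ)

/-- `Kᵢ − L⁰₊(Ω, ℱᵢ_T, P)`. -/
def KminusL0 [MeasurableSpace Ω] (P : Measure Ω) (FT : MeasurableSpace Ω)
    (Ki : Set (Ω → ℝ)) : Set (Ω → ℝ) :=
  { g | ∃ k ∈ Ki, ∃ l : Ω → ℝ, Measurable[FT] l ∧ (∀ᵐ ω ∂P, 0 ≤ l ω) ∧
      g = fun ω => k ω - l ω }

/-- Closedness of a set of random variables under `P`-a.s. convergence of sequences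
(within `L⁰(Ω, ℱ_T, P)`). -/
def ClosedASone [MeasurableSpace Ω] (P : Measure Ω) (FT : MeasurableSpace Ω)
    (S : Set (Ω → ℝ)) : Prop :=
  ∀ (f : ℕ → Ω → ℝ) (g : Ω → ℝ), (∀ n, f n ∈ S) → Measurable[FT] g →
    (∀ᵐ ω ∂P, Tendsto (fun n => f n ω) atTop (𝓝 (g ω))) → g ∈ S


lemma gainsSet_smul {Ω : Type*} {J : ℕ} (F : ℕ → MeasurableSpace Ω) (T : ℕ)
    (A : Finset (Fin J)) (X : Fin J → ℕ → Ω → ℝ) (a : ℝ) {k : Ω → ℝ}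
    (hk : k ∈ gainsSet F T A X) : (fun ω => a * k ω) ∈ gainsSet F T A X := by
  obtain ⟨H, hH, hkeq⟩ := hk
  refine ⟨fun j s ω => a * H j s ω,
    fun j hj s h1 h2 => (hH j hj s h1 h2).const_mul a, ?_⟩
  funext ω
  simp [hkeq, Finset.mul_sum, mul_assoc]

/-- closedness of `⨉ᵢ (Kᵢ − L⁰₊) + ℝ^N_0` under a.s. convergence,
assuming `NAᵢ` and closedness of each `Kᵢ − L⁰₊`. -/
theorem product_plus_zeroSum_closed
    {Ω : Type*} [m0 : MeasurableSpace Ω]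
    (P : Measure Ω) [IsProbabilityMeasure P]
    (T J N : ℕ) (hT : 1 ≤ T) (hJ : 1 ≤ J) (hN : 1 ≤ N)
    (F : Fin N → ℕ → MeasurableSpace Ω)
    (hFmono : ∀ i, Monotone (F i))
    (hFle : ∀ i t, F i t ≤ m0)
    (hFzero : ∀ i, ∀ A : Set Ω, MeasurableSet[F i 0] A → P A = 0 ∨ P A = 1)
    (X : Fin J → ℕ → Ω → ℝ)
    (assets : Fin N → Finset (Fin J))
    (hassets : ∀ i, (assets i).Nonempty)
    (hcover : ∀ j, ∃ i, j ∈ assets i)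
    (hadapted : ∀ i, ∀ j ∈ assets i, ∀ t, t ≤ T → Measurable[F i t] (X j t))
    (hNA : ∀ i, NAone P (gainsSet (F i) T (assets i) X))
    (hKclosed : ∀ i, ClosedASone P (F i T)
      (KminusL0 P (F i T) (gainsSet (F i) T (assets i) X))) :
    ClosedAS P (fun i => F i T)
      (KY P (fun i => F i T) (fun i => gainsSet (F i) T (assets i) X) (zeroSum Ω N)) := by
  intro f g hf hgmeas htend
  choose k l y hy hk hl heq using hf
  choose x hxsum hyx using hy
  have hfval : ∀ n i ω, f n i ω = k n i ω - l n i ω + x n i := by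
    intro n i ω
    rw [heq n i]
    simp [hyx n i]
  by_cases hb : ∃ M : ℝ, ∀ n, ‖x n‖ ≤ M
  · -- bounded case
    obtain ⟨M, hM⟩ := hb
    have hmem : ∀ n, x n ∈ Metric.closedBall (0 : Fin N → ℝ) M := by
      intro n; simpa [Metric.mem_closedBall, dist_eq_norm] using hM n
    obtain ⟨x', hx'mem, φ, hφ, hxconv⟩ :=
      (isCompact_closedBall (0 : Fin N → ℝ) M).tendsto_subseq hmem
    have hxconv' : ∀ i, Tendsto (fun m => x (φ m) i) atTop (𝓝 (x' i)) := by
      intro i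
      have := tendsto_pi_nhds.mp hxconv i
      simpa [Function.comp] using this
    have hlim : ∀ i, (fun ω => g i ω - x' i) ∈
        KminusL0 P (F i T) (gainsSet (F i) T (assets i) X) := by
      intro i
      refine hKclosed i (fun m => fun ω => k (φ m) i ω - l (φ m) i ω) _
        (fun m => ⟨k (φ m) i, hk _ i, l (φ m) i, (hl _ i).1, (hl _ i).2, rfl⟩)
        ((hgmeas i).sub measurable_const) ?_
      filter_upwards [htend i] with ω hω
      have h1 : Tendsto (fun m => f (φ m) i ω) atTop (𝓝 (g i ω)) :=
        hω.comp hφ.tendsto_atTop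
      have h2 := h1.sub (hxconv' i)
      refine h2.congr fun m => ?_
      rw [hfval (φ m) i ω]; ring
    choose k' hk' l' hl'm hl'p hEq using hlim
    have hsum' : (∑ i, x' i) = 0 := by
      have h1 : Tendsto (fun m => ∑ i, x (φ m) i) atTop (𝓝 (∑ i, x' i)) :=
        tendsto_finset_sum _ fun i _ => hxconv' i
      have h2 : Tendsto (fun m => ∑ i, x (φ m) i) atTop (𝓝 (0 : ℝ)) := by
        simpa [hxsum] using tendsto_const_nhds (α := ℝ) (f := atTop (α := ℕ))
      exact tendsto_nhds_unique h1 h2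
    refine ⟨k', l', fun i _ => x' i, ⟨x', hsum', fun i => rfl⟩, hk',
      fun i => ⟨hl'm i, hl'p i⟩, ?_⟩
    intro i
    funext ω
    have h := congrFun (hEq i) ω
    linarith
  · -- unbounded case: derive a contradiction
    exfalso
    push_neg at hb
    choose ψ hψ using fun m : ℕ => hb m
    set c : ℕ → ℝ := fun m => ‖x (ψ m)‖ with hc_def
    have hcpos : ∀ m, 0 < c m := fun m => lt_of_le_of_lt (Nat.cast_nonneg m) (hψ m)
    have hc : Tendsto c atTop atTop :=
      tendsto_atTop_mono (fun m => (hψ m).le) tendsto_natCast_atTop_atTop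
    set u : ℕ → Fin N → ℝ := fun m => (c m)⁻¹ • x (ψ m) with hu_def
    have humem : ∀ m, u m ∈ Metric.sphere (0 : Fin N → ℝ) 1 := by
      intro m
      rw [mem_sphere_zero_iff_norm]
      rw [hu_def]
      simp only [norm_smul, Real.norm_eq_abs, abs_inv, abs_of_pos (hcpos m)]
      exact inv_mul_cancel₀ (hcpos m).ne'
    obtain ⟨x', hx'mem, φ, hφ, huconv⟩ :=
      (isCompact_sphere (0 : Fin N → ℝ) 1).tendsto_subseq humem
    have huconv' : ∀ i, Tendsto (fun m => u (φ m) i) atTop (𝓝 (x' i)) := by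
      intro i
      have := tendsto_pi_nhds.mp huconv i
      simpa [Function.comp] using this
    have hcinv : Tendsto (fun m => (c (φ m))⁻¹) atTop (𝓝 0) :=
      (hc.comp hφ.tendsto_atTop).inv_tendsto_atTop
    have hlim : ∀ i, (fun _ : Ω => -(x' i)) ∈
        KminusL0 P (F i T) (gainsSet (F i) T (assets i) X) := by
      intro i
      refine hKclosed i
        (fun m => fun ω => (c (φ m))⁻¹ * (k (ψ (φ m)) i ω - l (ψ (φ m)) i ω)) _
        (fun m => ⟨fun ω => (c (φ m))⁻¹ * k (ψ (φ m)) i ω,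
          gainsSet_smul _ _ _ _ _ (hk _ i),
          fun ω => (c (φ m))⁻¹ * l (ψ (φ m)) i ω,
          ((hl _ i).1).const_mul _, ?_, by funext ω; ring⟩)
        measurable_const ?_
      · filter_upwards [(hl (ψ (φ m)) i).2] with ω h
        exact mul_nonneg (inv_nonneg.mpr (hcpos _).le) h
      · filter_upwards [htend i] with ω hω
        obtain ⟨C, hC⟩ := hω.abs.bddAbove_range
        have hCb : ∀ n, |f n i ω| ≤ C := fun n => hC ⟨n, rfl⟩
        have hCc : Tendsto (fun m => (c (φ m))⁻¹ * C) atTop (𝓝 0) := by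
          simpa using hcinv.mul_const C
        have h1 : Tendsto (fun m => (c (φ m))⁻¹ * f (ψ (φ m)) i ω) atTop (𝓝 0) := by
          refine tendsto_of_tendsto_of_tendsto_of_le_of_le (by simpa using hCc.neg) hCc
            (fun m => ?_) (fun m => ?_)
          · have habs : |(c (φ m))⁻¹ * f (ψ (φ m)) i ω| ≤ (c (φ m))⁻¹ * C := by
              rw [abs_mul, abs_inv, abs_of_pos (hcpos _)]
              exact mul_le_mul_of_nonneg_left (hCb _) (inv_nonneg.mpr (hcpos _).le)
            exact (abs_le.mp habs).1
          · have habs : |(c (φ m))⁻¹ * f (ψ (φ m)) i ω| ≤ (c (φ m))⁻¹ * C := by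
              rw [abs_mul, abs_inv, abs_of_pos (hcpos _)]
              exact mul_le_mul_of_nonneg_left (hCb _) (inv_nonneg.mpr (hcpos _).le)
            exact (abs_le.mp habs).2
        have h2 := h1.sub (huconv' i)
        have h3 : Tendsto (fun m =>
            (c (φ m))⁻¹ * (k (ψ (φ m)) i ω - l (ψ (φ m)) i ω)) atTop (𝓝 (0 - x' i)) := by
          refine h2.congr fun m => ?_
          have hfv := hfval (ψ (φ m)) i ω
          have huv : u (φ m) i = (c (φ m))⁻¹ * x (ψ (φ m)) i := by
            rw [hu_def]; simp [smul_eq_mul]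
          rw [huv]
          have : k (ψ (φ m)) i ω - l (ψ (φ m)) i ω = f (ψ (φ m)) i ω - x (ψ (φ m)) i := by
            rw [hfv]; ring
          rw [this]; ring
        simpa using h3
    haveI : (MeasureTheory.ae P).NeBot :=
      MeasureTheory.ae_neBot.mpr (IsProbabilityMeasure.ne_zero P)
    have hnonneg : ∀ i, 0 ≤ x' i := by
      intro i
      by_contra hneg
      push_neg at hneg
      obtain ⟨k₀, hk₀, l₀, hl₀m, hl₀p, hEq0⟩ := hlim i
      have hk₀pos : ∀ᵐ ω ∂P, 0 ≤ k₀ ω := by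
        filter_upwards [hl₀p] with ω h
        have := congrFun hEq0 ω
        linarith
      have hzero := hNA i k₀ hk₀ hk₀pos
      have hae : ∀ᵐ ω ∂P, (0:ℝ) ≤ x' i := by
        filter_upwards [hzero, hl₀p] with ω h0 hlp
        have := congrFun hEq0 ω
        linarith
      obtain ⟨ω, hω⟩ := hae.exists
      linarith
    have hsum' : (∑ i, x' i) = 0 := by
      have h1 : Tendsto (fun m => ∑ i, u (φ m) i) atTop (𝓝 (∑ i, x' i)) :=
        tendsto_finset_sum _ fun i _ => huconv' i
      have h2 : ∀ m, (∑ i, u (φ m) i) = 0 := by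
        intro m
        rw [hu_def]
        simp only [Pi.smul_apply, smul_eq_mul, ← Finset.mul_sum]
        rw [hxsum]; ring
      have h3 : Tendsto (fun m => ∑ i, u (φ m) i) atTop (𝓝 (0 : ℝ)) := by
        simpa [h2] using tendsto_const_nhds (α := ℝ) (f := atTop (α := ℕ))
      exact tendsto_nhds_unique h1 h3
    have hall : ∀ i ∈ Finset.univ, x' i = 0 :=
      (Finset.sum_eq_zero_iff_of_nonneg fun i _ => hnonneg i).mp hsum'
    have hx0 : x' = 0 := funext fun i => hall i (Finset.mem_univ i)
    have := mem_sphere_zero_iff_norm.mp hx'mem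
    rw [hx0] at this
    simp at this


end CollectiveArb
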